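/- arXiv:1603.06905 — 3 statements merged into one kernel-verified Lean document; each statement's English description precedes it below -/
import Mathlib

section
/- If a continuous map f : [0,1] → [0,1] has a periodic point of period m > 2, then the cardinalities of orbits of f are not uniformly bounded: for every N there exists a point whose forward orbit has more than N elements. -/
/-!
If every orbit had at most `N` points, each `f^[N] y` would be periodic with period dividing
`N!`. Hence `f^[N]` maps `[0,1]` onto a compact interval `J` containing the periodic point `x`,
invariant under `f`, on which `f^[N!]` is the identity; so `f` is injective and continuous on `J`,
hence strictly monotone or strictly antitone there. A monotone self-map of an ordered set has
only fixed points as periodic points, so in either case every periodic point in `J` has period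
dividing 2, contradicting `m > 2`.
-/

open Function Set

section PeriodicMonotone

variable {α : Type*} [LinearOrder α] {f : α → α} {s : Set α} {x : α} {n : ℕ}

theorem MonotoneOn.isFixedPt_of_isPeriodicPt (hf : MonotoneOn f s) (hmaps : MapsTo f s s)
    (hx : x ∈ s) (hn : 0 < n) (hper : IsPeriodicPt f n x) : IsFixedPt f x := by
  set g := hmaps.restrict f s s
  have hg : g^[n] ⟨x, hx⟩ = id^[n] ⟨x, hx⟩ := by
    rw [hmaps.iterate_restrict, iterate_id]
    exact Subtype.ext hper
  have := (Commute.id_right (f := g)).iterate_pos_eq_iff_map_eq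
    (fun a b hab => hf a.2 b.2 hab) strictMono_id hn |>.mp hg
  exact congrArg Subtype.val this

theorem AntitoneOn.isPeriodicPt_two_of_isPeriodicPt (hf : AntitoneOn f s) (hmaps : MapsTo f s s)
    (hx : x ∈ s) (hn : 0 < n) (hper : IsPeriodicPt f n x) : IsPeriodicPt f 2 x :=
  (hf.comp hf hmaps).isFixedPt_of_isPeriodicPt (hmaps.iterate 2) hx hn (hper.iterate 2)

end PeriodicMonotone

theorem ContinuousOn.isPeriodicPt_two_of_injOn_Icc {α : Type*}
    [ConditionallyCompleteLinearOrder α] [TopologicalSpace α] [OrderTopology α] [DenselyOrdered α]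
    {f : α → α} {a b x : α} {n : ℕ} (hab : a ≤ b) (hf : ContinuousOn f (Icc a b))
    (hmaps : MapsTo f (Icc a b) (Icc a b)) (hinj : InjOn f (Icc a b)) (hx : x ∈ Icc a b)
    (hn : 0 < n) (hper : IsPeriodicPt f n x) : IsPeriodicPt f 2 x := by
  rcases hf.strictMonoOn_of_injOn_Icc' hab hinj with hmono | hanti
  · exact (hmono.monotoneOn.isFixedPt_of_isPeriodicPt hmaps hx hn hper).isPeriodicPt 2
  · exact hanti.antitoneOn.isPeriodicPt_two_of_isPeriodicPt hmaps hx hn hper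

section Orbit

variable {α : Type*} {f : α → α} {s : Set α} {x y : α} {n N : ℕ}

theorem exists_iterate_eq_of_forall_card_le
    (h : ∀ t : Finset α, ↑t ⊆ range (fun k : ℕ => f^[k] y) → t.card ≤ N) :
    ∃ i j, i < j ∧ j ≤ N ∧ f^[i] y = f^[j] y := by
  classical
  let t := (Finset.range (N + 1)).image (fun k => f^[k] y)
  have hcard : t.card < (Finset.range (N + 1)).card := by
    rw [Finset.card_range]
    exact Nat.lt_succ_of_le (h t (by simp [t]))
  obtain ⟨i, hi, j, hj, hne, heq⟩ := Finset.exists_ne_map_eq_of_card_lt_of_maps_to hcard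
    (fun k hk => Finset.mem_image_of_mem (fun k => f^[k] y) hk)
  rw [Finset.mem_range] at hi hj
  rcases hne.lt_or_gt with hlt | hlt
  · exact ⟨i, j, hlt, by omega, heq⟩
  · exact ⟨j, i, hlt, by omega, heq.symm⟩

theorem isPeriodicPt_iterate_factorial_of_iterate_eq {i j : ℕ} (hij : i < j) (hjN : j ≤ N)
    (h : f^[i] y = f^[j] y) : IsPeriodicPt f N.factorial (f^[N] y) := by
  have hper : IsPeriodicPt f (j - i) (f^[i] y) := by
    rw [IsPeriodicPt, IsFixedPt, ← iterate_add_apply, Nat.sub_add_cancel hij.le, h]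
  have := (hper.trans_dvd (Nat.dvd_factorial (n := N) (by omega) (by omega))).apply_iterate (N - i)
  rwa [← iterate_add_apply, Nat.sub_add_cancel (by omega)] at this

theorem IsPeriodicPt.mem_image_iterate (hper : IsPeriodicPt f n x) (hn : 0 < n)
    (hmaps : MapsTo f s s) (hx : x ∈ s) (N : ℕ) : x ∈ f^[N] '' s := by
  refine ⟨f^[n * N - N] x, hmaps.iterate _ hx, ?_⟩
  rw [← iterate_add_apply, Nat.add_sub_cancel' (Nat.le_mul_of_pos_left N hn)]
  exact (hper.mul_const N).eq

end Orbit

theorem stmt_3 (f : ℝ → ℝ) (hf : ContinuousOn f (Set.Icc 0 1))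
    (hmaps : Set.MapsTo f (Set.Icc 0 1) (Set.Icc 0 1))
    (m : ℕ) (hm : 2 < m) (x : ℝ) (hx : x ∈ Set.Icc (0:ℝ) 1)
    (hper : f^[m] x = x) (hmin : ∀ j : ℕ, 0 < j → j < m → f^[j] x ≠ x) :
    ∀ N : ℕ, ∃ y ∈ Set.Icc (0:ℝ) 1, ∃ t : Finset ℝ,
      ↑t ⊆ Set.range (fun k : ℕ => f^[k] y) ∧ N < t.card := by
  intro N
  by_contra! hN
  set J := f^[N] '' Icc (0 : ℝ) 1
  have hJ_per : ∀ z ∈ J, IsPeriodicPt f N.factorial z := by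
    rintro _ ⟨y, hy, rfl⟩
    obtain ⟨i, j, hij, hjN, heq⟩ := exists_iterate_eq_of_forall_card_le (hN y hy)
    exact isPeriodicPt_iterate_factorial_of_iterate_eq hij hjN heq
  have hinj : InjOn f J := fun u hu v hv huv =>
    (hJ_per u hu).eq_of_apply_eq_same (hJ_per v hv) N.factorial_pos huv
  have hxJ : x ∈ J := IsPeriodicPt.mem_image_iterate hper (by omega) hmaps hx N
  have hfJ : ContinuousOn f J := hf.mono (hmaps.iterate N).image_subset
  have hJ_maps : MapsTo f J J := (Commute.iterate_self f N).mapsTo_image hmaps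
  have hJ_Icc : J = Icc (sInf J) (sSup J) := (hf.iterate hmaps N).image_Icc zero_le_one
  rw [hJ_Icc] at hJ_per hinj hxJ hfJ hJ_maps
  exact hmin 2 two_pos hm <| hfJ.isPeriodicPt_two_of_injOn_Icc (hxJ.1.trans hxJ.2) hJ_maps hinj
    hxJ N.factorial_pos (hJ_per x hxJ)
end

section
/- Let h be the homeomorphism conjugating the symmetric tent map f to the asymmetric tent map f_v (v ≠ 1/2), i.e., h ∘ f = f_v ∘ h. Then at every point x where the derivative h'(x) exists and is finite, h'(x) = 0. -/
noncomputable def tent (x : ℝ) : ℝ := if x ≤ 1/2 then 2*x else 2 - 2*x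

noncomputable def tentV (v x : ℝ) : ℝ := if x ≤ v then x / v else (1 - x) / (1 - v)

/-!
Since `tent 0 = 0` while `tentV v 1 = 0 ≠ 1`, the homeomorphism `h` is increasing, so `h 1 = 1`,
`h (1/2) = v`, and `h` satisfies the self-similarity `h (y/2) = v * h y`,
`h (1 - y/2) = 1 - (1 - v) * h y`. Hence the increment of `h` over the level-`(n+1)` dyadic interval
around `x` is `v` or `1 - v` times its increment over the level-`n` one. If `h` has derivative `d`
at `x`, then `2ⁿ` times these increments tends to `d`, while consecutive terms differ by a factor
`2v` or `2(1 - v)`, both `≠ 1`; so `d = 0`.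
-/

open Set Filter Topology Asymptotics

lemma tent_of_le_half {x : ℝ} (hx : x ≤ 1/2) : tent x = 2 * x := if_pos hx

lemma tent_of_half_le {x : ℝ} (hx : 1/2 ≤ x) : tent x = 2 - 2 * x := by
  unfold tent
  split_ifs with h
  · rw [le_antisymm h hx]; norm_num
  · rfl

lemma tent_mem_Icc {x : ℝ} (hx : x ∈ Icc (0:ℝ) 1) : tent x ∈ Icc (0:ℝ) 1 := by
  obtain ⟨h0, h1⟩ := hx
  unfold tent
  split_ifs <;> constructor <;> linarith

lemma tentV_of_le {v x : ℝ} (hx : x ≤ v) : tentV v x = x / v := if_pos hx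

lemma tentV_of_ge {v x : ℝ} (hv : v ∈ Ioo (0:ℝ) 1) (hx : v ≤ x) :
    tentV v x = (1 - x) / (1 - v) := by
  unfold tentV
  split_ifs with h
  · rw [le_antisymm h hx, div_self hv.1.ne', div_self (sub_ne_zero.2 hv.2.ne')]
  · rfl

lemma tentV_one {v : ℝ} (hv : v < 1) : tentV v 1 = 0 := by
  simp [tentV, not_le.2 hv]

lemma eq_of_tentV_eq_one {v y : ℝ} (hv : v ∈ Ioo (0:ℝ) 1) (hy : tentV v y = 1) : y = v := by
  unfold tentV at hy
  split_ifs at hy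
  · exact (div_eq_one_iff_eq hv.1.ne').1 hy
  · linarith [(div_eq_one_iff_eq (sub_ne_zero.2 hv.2.ne')).1 hy]

def IsTentSelfSimilar (v : ℝ) (g : ℝ → ℝ) : Prop :=
  ∀ y ∈ Icc (0:ℝ) 1, g (y / 2) = v * g y ∧ g (1 - y / 2) = 1 - (1 - v) * g y

section Conjugacy

variable {v : ℝ} {h : ℝ → ℝ}

lemma strictMonoOn_and_map_one_of_conj (hv : v ∈ Ioo (0:ℝ) 1) (hh : ContinuousOn h (Icc 0 1))
    (hbij : BijOn h (Icc 0 1) (Icc 0 1))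
    (hconj : ∀ x ∈ Icc (0:ℝ) 1, h (tent x) = tentV v (h x)) :
    StrictMonoOn h (Icc 0 1) ∧ h 1 = 1 := by
  have hfix : h 0 = tentV v (h 0) := by
    simpa [tent] using hconj 0 (left_mem_Icc.2 zero_le_one)
  rcases hh.strictMonoOn_of_injOn_Icc' zero_le_one hbij.injOn with hmono | hanti
  · have him := hh.image_Icc_of_monotoneOn zero_le_one hmono.monotoneOn
    rw [hbij.image_eq, Icc_eq_Icc_iff zero_le_one] at him
    exact ⟨hmono, him.2.symm⟩
  · have him := hh.image_Icc_of_antitoneOn zero_le_one hanti.antitoneOn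
    rw [hbij.image_eq, Icc_eq_Icc_iff zero_le_one] at him
    rw [← him.2, tentV_one hv.2] at hfix
    norm_num at hfix

lemma map_half_of_conj (hv : v ∈ Ioo (0:ℝ) 1) (h1 : h 1 = 1)
    (hconj : ∀ x ∈ Icc (0:ℝ) 1, h (tent x) = tentV v (h x)) : h (1/2) = v := by
  apply eq_of_tentV_eq_one hv
  rw [← hconj _ ⟨by norm_num, by norm_num⟩, tent_of_le_half le_rfl]
  norm_num [h1]

lemma isTentSelfSimilar_of_conj (hv : v ∈ Ioo (0:ℝ) 1) (hmono : MonotoneOn h (Icc 0 1))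
    (hhalf : h (1/2) = v) (hconj : ∀ x ∈ Icc (0:ℝ) 1, h (tent x) = tentV v (h x)) :
    IsTentSelfSimilar v h := by
  intro y ⟨hy0, hy1⟩
  have hhalf_mem : (1/2 : ℝ) ∈ Icc (0:ℝ) 1 := ⟨by norm_num, by norm_num⟩
  have hl : y / 2 ∈ Icc (0:ℝ) 1 := ⟨by linarith, by linarith⟩
  have hr : 1 - y / 2 ∈ Icc (0:ℝ) 1 := ⟨by linarith, by linarith⟩
  have hl_le : h (y / 2) ≤ v := hhalf ▸ hmono hl hhalf_mem (by linarith)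
  have hr_ge : v ≤ h (1 - y / 2) := hhalf ▸ hmono hhalf_mem hr (by linarith)
  have el := hconj _ hl
  have er := hconj _ hr
  rw [tent_of_le_half (by linarith), tentV_of_le hl_le, show 2 * (y / 2) = y by ring] at el
  rw [tent_of_half_le (by linarith), tentV_of_ge hv hr_ge, show 2 - 2 * (1 - y / 2) = y by ring]
    at er
  have hv1 : 1 - v ≠ 0 := sub_ne_zero.2 hv.2.ne'
  rw [eq_div_iff hv.1.ne'] at el
  rw [eq_div_iff hv1] at er
  constructor <;> linarith

end Conjugacy

/-- The level-`(n+1)` interval around `x` is the pull-back of the level-`n` interval around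
`tent x` along the branch of `tent` through `x`. -/
noncomputable def dyadicInterval : ℕ → ℝ → ℝ × ℝ
  | 0, _ => (0, 1)
  | n + 1, x =>
    let I := dyadicInterval n (tent x)
    if x ≤ 1/2 then (I.1 / 2, I.2 / 2) else (1 - I.2 / 2, 1 - I.1 / 2)

noncomputable def dyadicIncrement (g : ℝ → ℝ) (n : ℕ) (x : ℝ) : ℝ :=
  g (dyadicInterval n x).2 - g (dyadicInterval n x).1

lemma dyadicInterval_snd_sub_fst (n : ℕ) (x : ℝ) :
    (dyadicInterval n x).2 - (dyadicInterval n x).1 = (1/2) ^ n := by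
  induction n generalizing x with
  | zero => norm_num [dyadicInterval]
  | succ n ih =>
    have := ih (tent x)
    simp only [dyadicInterval]
    split_ifs <;> rw [pow_succ] <;> linarith

lemma dyadicInterval_bounds (n : ℕ) {x : ℝ} (hx : x ∈ Icc (0:ℝ) 1) :
    0 ≤ (dyadicInterval n x).1 ∧ (dyadicInterval n x).1 ≤ x ∧
      x ≤ (dyadicInterval n x).2 ∧ (dyadicInterval n x).2 ≤ 1 := by
  induction n generalizing x with
  | zero => simpa [dyadicInterval] using hx
  | succ n ih =>
    obtain ⟨h0, h1, h2, h3⟩ := ih (tent_mem_Icc hx)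
    set I := dyadicInterval n (tent x)
    simp only [dyadicInterval]
    split_ifs with hc
    · rw [tent_of_le_half hc] at h1 h2
      refine ⟨?_, ?_, ?_, ?_⟩ <;> dsimp only <;> linarith
    · rw [tent_of_half_le (not_le.1 hc).le] at h1 h2
      refine ⟨?_, ?_, ?_, ?_⟩ <;> dsimp only <;> linarith

namespace IsTentSelfSimilar

variable {v : ℝ} {g : ℝ → ℝ}

lemma dyadicIncrement_succ (hg : IsTentSelfSimilar v g) (n : ℕ) {x : ℝ}
    (hx : x ∈ Icc (0:ℝ) 1) :
    dyadicIncrement g (n + 1) x =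
      (if x ≤ 1/2 then v else 1 - v) * dyadicIncrement g n (tent x) := by
  obtain ⟨h0, h1, h2, h3⟩ := dyadicInterval_bounds n (tent_mem_Icc hx)
  have hfst : (dyadicInterval n (tent x)).1 ∈ Icc (0:ℝ) 1 := ⟨h0, by linarith⟩
  have hsnd : (dyadicInterval n (tent x)).2 ∈ Icc (0:ℝ) 1 := ⟨by linarith, h3⟩
  simp only [dyadicIncrement, dyadicInterval]
  split_ifs
  · rw [(hg _ hfst).1, (hg _ hsnd).1]; ring
  · rw [(hg _ hfst).2, (hg _ hsnd).2]; ring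

lemma dyadicIncrement_succ_eq (hg : IsTentSelfSimilar v g) (n : ℕ) {x : ℝ}
    (hx : x ∈ Icc (0:ℝ) 1) :
    dyadicIncrement g (n + 1) x = v * dyadicIncrement g n x ∨
      dyadicIncrement g (n + 1) x = (1 - v) * dyadicIncrement g n x := by
  induction n generalizing x with
  | zero =>
    rw [hg.dyadicIncrement_succ 0 hx]
    split_ifs
    · exact Or.inl rfl
    · exact Or.inr rfl
  | succ n ih =>
    rw [hg.dyadicIncrement_succ (n + 1) hx, hg.dyadicIncrement_succ n hx]
    rcases ih (tent_mem_Icc hx) with e | e <;> rw [e]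
    · left; ring
    · right; ring

end IsTentSelfSimilar

lemma HasDerivWithinAt.tendsto_slope_of_straddle {ι : Type*} {l : Filter ι} {f : ℝ → ℝ}
    {s : Set ℝ} {x d : ℝ} {a b : ι → ℝ} (hf : HasDerivWithinAt f d s x)
    (ha : ∀ n, a n ∈ s) (hb : ∀ n, b n ∈ s)
    (hax : ∀ n, a n ≤ x) (hxb : ∀ n, x ≤ b n) (hab : ∀ n, a n < b n)
    (hlim : Tendsto (fun n => b n - a n) l (𝓝 0)) :
    Tendsto (fun n => (f (b n) - f (a n)) / (b n - a n)) l (𝓝 d) := by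
  have hta : Tendsto a l (𝓝[s] x) := by
    refine tendsto_nhdsWithin_iff.2 ⟨?_, Eventually.of_forall ha⟩
    refine tendsto_of_tendsto_of_tendsto_of_le_of_le (g := fun n => x - (b n - a n))
      (by simpa using tendsto_const_nhds.sub hlim) tendsto_const_nhds
      (fun n => by linarith [hxb n]) hax
  have htb : Tendsto b l (𝓝[s] x) := by
    refine tendsto_nhdsWithin_iff.2 ⟨?_, Eventually.of_forall hb⟩
    refine tendsto_of_tendsto_of_tendsto_of_le_of_le (h := fun n => x + (b n - a n))
      tendsto_const_nhds (by simpa using tendsto_const_nhds.add hlim) hxb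
      (fun n => by linarith [hax n])
  have hoa := (hf.isLittleO.comp_tendsto hta).trans_le (k := fun n => b n - a n) fun n => by
    simp only [Function.comp_apply, Real.norm_eq_abs]
    rw [abs_of_nonpos (by linarith [hax n]), abs_of_pos (by linarith [hab n])]
    linarith [hxb n]
  have hob := (hf.isLittleO.comp_tendsto htb).trans_le (k := fun n => b n - a n) fun n => by
    simp only [Function.comp_apply, Real.norm_eq_abs]
    rw [abs_of_nonneg (by linarith [hxb n]), abs_of_pos (by linarith [hab n])]
    linarith [hax n]
  refine tendsto_sub_nhds_zero_iff.1 ((hob.sub hoa).tendsto_div_nhds_zero.congr fun n => ?_)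
  have := (sub_pos.2 (hab n)).ne'
  simp only [Function.comp_apply, smul_eq_mul]
  field_simp
  ring

lemma eq_zero_of_tendsto_of_abs_sub_eq {u : ℕ → ℝ} {c d : ℝ} (hc : c ≠ 0)
    (hu : Tendsto u atTop (𝓝 d)) (hstep : ∀ n, |u (n + 1) - u n| = c * |u n|) : d = 0 := by
  have h0 : Tendsto (fun n => |u (n + 1) - u n|) atTop (𝓝 0) := by
    simpa using ((hu.comp (tendsto_add_atTop_nat 1)).sub hu).abs
  have hcd : Tendsto (fun n => |u (n + 1) - u n|) atTop (𝓝 (c * |d|)) := by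
    simpa only [hstep] using hu.abs.const_mul c
  simpa [hc] using tendsto_nhds_unique hcd h0

theorem stmt_12 (v : ℝ) (hv : v ∈ Set.Ioo (0:ℝ) 1) (hv2 : v ≠ 1/2)
    (h : ℝ → ℝ) (hh : ContinuousOn h (Set.Icc 0 1))
    (hbij : Set.BijOn h (Set.Icc 0 1) (Set.Icc 0 1))
    (hconj : ∀ x ∈ Set.Icc (0:ℝ) 1, h (tent x) = tentV v (h x)) :
    ∀ x ∈ Set.Icc (0:ℝ) 1, ∀ d : ℝ,
      HasDerivWithinAt h d (Set.Icc 0 1) x → d = 0 := by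
  intro x hx d hd
  obtain ⟨hmono, h1⟩ := strictMonoOn_and_map_one_of_conj hv hh hbij hconj
  have hself := isTentSelfSimilar_of_conj hv hmono.monotoneOn (map_half_of_conj hv h1 hconj) hconj
  set u : ℕ → ℝ := fun n => 2 ^ n * dyadicIncrement h n x
  have hI := fun n => dyadicInterval_bounds n hx
  have hu : Tendsto u atTop (𝓝 d) := by
    have hlen := dyadicInterval_snd_sub_fst (x := x)
    have := hd.tendsto_slope_of_straddle (fun n => ⟨(hI n).1, (hI n).2.1.trans hx.2⟩)
      (fun n => ⟨hx.1.trans (hI n).2.2.1, (hI n).2.2.2⟩) (fun n => (hI n).2.1)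
      (fun n => (hI n).2.2.1) (fun n => by linarith [hlen n, pow_pos (one_half_pos (α := ℝ)) n])
      (by simpa only [hlen] using
        tendsto_pow_atTop_nhds_zero_of_lt_one (by norm_num) one_half_lt_one)
    refine this.congr fun n => ?_
    rw [hlen n, one_div, inv_pow, div_inv_eq_mul, mul_comm]
    rfl
  refine eq_zero_of_tendsto_of_abs_sub_eq (c := |2 * v - 1|) ?_ hu fun n => ?_
  · exact abs_ne_zero.2 fun h0 => hv2 (by linarith)
  · rcases hself.dyadicIncrement_succ_eq n hx with e | e
    · rw [show u (n + 1) - u n = (2 * v - 1) * u n by simp only [u, e, pow_succ]; ring, abs_mul]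
    · rw [show u (n + 1) - u n = -(2 * v - 1) * u n by simp only [u, e, pow_succ]; ring, abs_mul,
        abs_neg]
end

section
/- Every piecewise linear nonconstant solution ξ : [0,1] → [0,1] of the functional equation ξ(f(x)) = f(ξ(x)), where f is the symmetric tent map, is of the form ξ(x) = (1 - (-1)^⌊kx⌋)/2 + (-1)^⌊kx⌋·{kx} for some natural k ≥ 1; the constant solutions are ξ ≡ 0 and ξ ≡ 2/3. -/
noncomputable def zigzag (k : ℕ) (x : ℝ) : ℝ :=
  (1 - (-1:ℝ) ^ Int.floor ((k:ℝ) * x)) / 2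
    + (-1:ℝ) ^ Int.floor ((k:ℝ) * x) * Int.fract ((k:ℝ) * x)

def PiecewiseLinearOn (f : ℝ → ℝ) (a b : ℝ) : Prop :=
  ∃ (n : ℕ) (p : Fin (n+1) → ℝ), p 0 = a ∧ p (Fin.last n) = b ∧ StrictMono p ∧
    ∀ i : Fin n, ∃ c d : ℝ, ∀ x ∈ Set.Icc (p i.castSucc) (p i.succ), f x = c * x + d

/-!
A solution `ξ` is affine, `ξ x = c x + d`, on some `[0, a]`. Evaluating the equation at `0` makes
`d` a fixed point of the tent map, so `d = 0` or `d = 2/3`. Since `tent (x / 2) = x` for `x ≤ 1`,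
the equation `ξ x = tent (ξ (x / 2))` determines `ξ` on `[0, 2a]` from `ξ` on `[0, a]`, hence on
all of `[0, 1]`. For `d = 2/3` the equation near `0` forces `c = 0`. For `d = 0` we have `c ≥ 0`
as `ξ ≥ 0`; if `c > 0`, the triangle wave `x ↦ triangleWave (c x)` has the same germ and satisfies
the same doubling relation, so `ξ` is that wave, and `ξ 0 = ξ (tent 1) = tent (ξ 1)` forces `c` to
be an integer.
-/

open Set

theorem tent_of_le {x : ℝ} (h : x ≤ 1/2) : tent x = 2 * x := if_pos h

theorem tent_of_gt {x : ℝ} (h : 1/2 < x) : tent x = 2 - 2 * x := if_neg (not_le.2 h)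

theorem tent_zero : tent 0 = 0 := by norm_num [tent]

theorem tent_one : tent 1 = 0 := by norm_num [tent]

theorem tent_two_thirds : tent (2/3) = 2/3 := by norm_num [tent]

theorem tent_eq_self_iff {x : ℝ} : tent x = x ↔ x = 0 ∨ x = 2/3 := by
  constructor
  · unfold tent; split_ifs <;> intro h
    · left; linarith
    · right; linarith
  · rintro (rfl | rfl)
    exacts [tent_zero, tent_two_thirds]

theorem tent_one_sub (x : ℝ) : tent (1 - x) = tent x := by
  unfold tent; split_ifs <;> linarith

theorem eq_zero_of_tent_add_two_thirds {y : ℝ} (h : tent (y + 2/3) = 2 * y + 2/3) : y = 0 := by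
  unfold tent at h; split_ifs at h <;> linarith

/-- The `2`-periodic triangle wave, equal to `t` on `[0, 1]`. -/
noncomputable def triangleWave (t : ℝ) : ℝ :=
  (1 - (-1:ℝ) ^ ⌊t⌋) / 2 + (-1:ℝ) ^ ⌊t⌋ * Int.fract t

theorem zigzag_eq_triangleWave (k : ℕ) (x : ℝ) : zigzag k x = triangleWave (k * x) := rfl

theorem triangleWave_of_even {t : ℝ} (h : Even ⌊t⌋) : triangleWave t = Int.fract t := by
  rw [triangleWave, h.neg_one_zpow]; ring

theorem triangleWave_of_odd {t : ℝ} (h : Odd ⌊t⌋) : triangleWave t = 1 - Int.fract t := by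
  rw [triangleWave, h.neg_one_zpow]; ring

theorem triangleWave_of_mem_Icc {t : ℝ} (ht : t ∈ Icc (0:ℝ) 1) : triangleWave t = t := by
  rcases ht.2.lt_or_eq with h1 | rfl
  · have hfloor : ⌊t⌋ = 0 := Int.floor_eq_zero_iff.2 ⟨ht.1, h1⟩
    rw [triangleWave_of_even (by simp [hfloor]), Int.fract_eq_self.2 ⟨ht.1, h1⟩]
  · rw [triangleWave_of_odd (by simp)]; simp

theorem triangleWave_add_two_mul (t : ℝ) (n : ℤ) : triangleWave (t + 2 * n) = triangleWave t := by
  have h : t + 2 * n = t + ((2 * n : ℤ) : ℝ) := by push_cast; ring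
  rw [triangleWave, triangleWave, h, Int.floor_add_intCast, Int.fract_add_intCast,
    zpow_add₀ (by norm_num), (even_two_mul n).neg_one_zpow, mul_one]

theorem triangleWave_two_mul_of_mem_Ico {u : ℝ} (hu : u ∈ Ico (0:ℝ) 1) :
    triangleWave (2 * u) = tent u := by
  rcases le_or_gt u (1/2) with h | h
  · rw [tent_of_le h, triangleWave_of_mem_Icc ⟨by linarith [hu.1], by linarith⟩]
  · have hfloor : ⌊2 * u⌋ = 1 := Int.floor_eq_iff.2 ⟨by push_cast; linarith, by
      push_cast; linarith [hu.2]⟩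
    rw [tent_of_gt h, triangleWave_of_odd (by simp [hfloor]), Int.fract, hfloor]
    push_cast; ring

theorem tent_triangleWave_eq_tent_fract (t : ℝ) : tent (triangleWave t) = tent (Int.fract t) := by
  rcases Int.even_or_odd ⌊t⌋ with h | h
  · rw [triangleWave_of_even h]
  · rw [triangleWave_of_odd h, tent_one_sub]

theorem tent_triangleWave (t : ℝ) : tent (triangleWave t) = triangleWave (2 * t) :=
  calc tent (triangleWave t) = tent (Int.fract t) := tent_triangleWave_eq_tent_fract t
    _ = triangleWave (2 * Int.fract t) :=
      (triangleWave_two_mul_of_mem_Ico ⟨Int.fract_nonneg t, Int.fract_lt_one t⟩).symm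
    _ = triangleWave (2 * Int.fract t + 2 * ⌊t⌋) := (triangleWave_add_two_mul _ _).symm
    _ = triangleWave (2 * t) := by rw [← mul_add, Int.fract_add_floor]

theorem exists_int_eq_two_mul_of_triangleWave_eq_zero {s : ℝ} (h : triangleWave s = 0) :
    ∃ j : ℤ, s = 2 * j := by
  rcases Int.even_or_odd ⌊s⌋ with ⟨j, hj⟩ | ho
  · rw [triangleWave_of_even ⟨j, hj⟩] at h
    refine ⟨j, ?_⟩
    rw [← Int.fract_add_floor s, h, hj]; push_cast; ring
  · rw [triangleWave_of_odd ho] at h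
    linarith [Int.fract_lt_one s]

theorem PiecewiseLinearOn.exists_affine_Icc_left {f : ℝ → ℝ} {a b : ℝ}
    (hf : PiecewiseLinearOn f a b) (hab : a < b) :
    ∃ a' ∈ Ioc a b, ∃ c d : ℝ, ∀ x ∈ Icc a a', f x = c * x + d := by
  obtain ⟨n, p, hp0, hpn, hmono, hpiece⟩ := hf
  cases n with
  | zero => exact absurd (hp0.symm.trans hpn) hab.ne
  | succ m =>
    obtain ⟨c, d, hcd⟩ := hpiece 0
    refine ⟨p (Fin.succ 0), ⟨?_, ?_⟩, c, d, fun x hx => hcd x ?_⟩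
    · rw [← hp0]; exact hmono (Fin.succ_pos 0)
    · rw [← hpn]; exact hmono.monotone (Fin.le_last _)
    · simpa [hp0] using hx

section Semiconjugacy

variable {ξ : ℝ → ℝ} (hξ : ∀ x ∈ Icc (0:ℝ) 1, ξ (tent x) = tent (ξ x))
include hξ

theorem eqOn_Icc_one_of_eqOn_Icc {g : ℝ → ℝ} {a : ℝ} (ha : 0 < a)
    (hg : ∀ x ∈ Icc (0:ℝ) (1/2), g (2 * x) = tent (g x)) (h : EqOn ξ g (Icc 0 a)) :
    EqOn ξ g (Icc 0 1) := by
  have key : ∀ n : ℕ, ∀ y ∈ Icc (0:ℝ) 1, y ≤ 2 ^ n * a → ξ y = g y := by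
    intro n
    induction n with
    | zero => exact fun y hy hya => h ⟨hy.1, by simpa using hya⟩
    | succ n ih =>
      intro y hy hya
      have hy2 : y / 2 ∈ Icc (0:ℝ) (1/2) := ⟨by linarith [hy.1], by linarith [hy.2]⟩
      calc ξ y = ξ (tent (y / 2)) := by rw [tent_of_le hy2.2]; ring_nf
        _ = tent (ξ (y / 2)) := hξ _ ⟨hy2.1, by linarith [hy2.2]⟩
        _ = tent (g (y / 2)) := by
          rw [ih _ ⟨hy2.1, by linarith [hy2.2]⟩ (by rw [pow_succ] at hya; linarith)]
        _ = g y := by rw [← hg _ hy2]; ring_nf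
  intro y hy
  obtain ⟨n, hn⟩ := pow_unbounded_of_one_lt (1 / a) one_lt_two
  refine key n y hy ?_
  rw [div_lt_iff₀ ha] at hn
  linarith [hy.2]

theorem exists_nat_eqOn_zigzag {a c : ℝ} (ha : 0 < a) (hc : 0 < c) (hca : c * a ≤ 1)
    (hlin : ∀ x ∈ Icc 0 a, ξ x = c * x) :
    ∃ k : ℕ, 1 ≤ k ∧ ∀ x ∈ Icc (0:ℝ) 1, ξ x = zigzag k x := by
  have hwave : EqOn ξ (fun x => triangleWave (c * x)) (Icc 0 1) := by
    refine eqOn_Icc_one_of_eqOn_Icc hξ ha (fun x _ => ?_) (fun x hx => ?_)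
    · rw [tent_triangleWave, mul_left_comm]
    · rw [hlin x hx, triangleWave_of_mem_Icc ⟨by nlinarith [hx.1], by nlinarith [hx.2]⟩]
  have h2c : triangleWave (2 * c) = 0 := by
    have h1 := hξ 1 (right_mem_Icc.2 zero_le_one)
    rw [tent_one, hwave (left_mem_Icc.2 zero_le_one), hwave (right_mem_Icc.2 zero_le_one)] at h1
    simp only [mul_zero, mul_one] at h1
    rw [tent_triangleWave, triangleWave_of_mem_Icc (by simp)] at h1
    exact h1.symm
  obtain ⟨j, hj⟩ := exists_int_eq_two_mul_of_triangleWave_eq_zero h2c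
  have hcj : c = j := by linarith
  lift j to ℕ using by exact_mod_cast hcj ▸ hc.le
  refine ⟨j, by exact_mod_cast hcj ▸ hc, fun x hx => ?_⟩
  rw [hwave hx, zigzag_eq_triangleWave, hcj]
  rfl

end Semiconjugacy

theorem stmt_17_general (ξ : ℝ → ℝ)
    (hmaps : Set.MapsTo ξ (Set.Icc 0 1) (Set.Icc 0 1))
    (hpl : PiecewiseLinearOn ξ 0 1)
    (hcomm : ∀ x ∈ Set.Icc (0:ℝ) 1, ξ (tent x) = tent (ξ x)) :
    (∀ x ∈ Set.Icc (0:ℝ) 1, ξ x = 0) ∨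
    (∀ x ∈ Set.Icc (0:ℝ) 1, ξ x = 2/3) ∨
    (∃ k : ℕ, 1 ≤ k ∧ ∀ x ∈ Set.Icc (0:ℝ) 1, ξ x = zigzag k x) := by
  obtain ⟨a, ⟨ha0, ha1⟩, c, d, hlin⟩ := hpl.exists_affine_Icc_left zero_lt_one
  have ha : a ∈ Icc (0:ℝ) 1 := ⟨ha0.le, ha1⟩
  have hd : tent d = d := by
    simpa [tent_zero, hlin 0 (left_mem_Icc.2 ha0.le)] using (hcomm 0 (left_mem_Icc.2 zero_le_one)).symm
  rcases tent_eq_self_iff.1 hd with rfl | rfl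
  · have hlin0 : ∀ x ∈ Icc 0 a, ξ x = c * x := fun x hx => by rw [hlin x hx, add_zero]
    have hξa := hmaps ha
    rw [hlin0 a (right_mem_Icc.2 ha0.le)] at hξa
    rcases (nonneg_of_mul_nonneg_left hξa.1 ha0).eq_or_lt with rfl | hc
    · refine Or.inl (eqOn_Icc_one_of_eqOn_Icc hcomm ha0 (fun _ _ => tent_zero.symm) ?_)
      exact fun x hx => by simpa using hlin0 x hx
    · exact Or.inr (Or.inr (exists_nat_eqOn_zigzag hcomm ha0 hc hξa.2 hlin0))
  · have hc : c = 0 := by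
      have hx : a / 2 ∈ Icc (0:ℝ) (1/2) := ⟨by linarith, by linarith⟩
      have h := hcomm (a / 2) ⟨hx.1, by linarith [hx.2]⟩
      rw [tent_of_le hx.2, hlin _ ⟨by linarith, by linarith⟩, hlin _ ⟨hx.1, by linarith⟩] at h
      have hca : c * (a / 2) = 0 := eq_zero_of_tent_add_two_thirds (by rw [← h]; ring)
      exact (mul_eq_zero.1 hca).resolve_right (by positivity)
    refine Or.inr (Or.inl (eqOn_Icc_one_of_eqOn_Icc hcomm ha0 (fun _ _ => tent_two_thirds.symm) ?_))
    exact fun x hx => by simp [hlin x hx, hc]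

theorem stmt_17 (ξ : ℝ → ℝ) (hc : ContinuousOn ξ (Set.Icc 0 1))
    (hmaps : Set.MapsTo ξ (Set.Icc 0 1) (Set.Icc 0 1))
    (hpl : PiecewiseLinearOn ξ 0 1)
    (hcomm : ∀ x ∈ Set.Icc (0:ℝ) 1, ξ (tent x) = tent (ξ x)) :
    (∀ x ∈ Set.Icc (0:ℝ) 1, ξ x = 0) ∨
    (∀ x ∈ Set.Icc (0:ℝ) 1, ξ x = 2/3) ∨
    (∃ k : ℕ, 1 ≤ k ∧ ∀ x ∈ Set.Icc (0:ℝ) 1, ξ x = zigzag k x) :=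
  stmt_17_general ξ hmaps hpl hcomm
end
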